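/- If a Borel measure μ has shadowing with respect to a time varying bi-measurable map F on a metric space, then μ is persistent with respect to F. -/
import Mathlib


open MeasureTheory Metric Set Filter

variable {X : Type*}

/-- Forward compositions `F_n = f_n ∘ ⋯ ∘ f_1 ∘ f_0` for `n ≥ 0`. -/
def compF (f : ℕ → X ≃ X) : ℕ → X → X
  | 0 => f 0
  | n + 1 => (f (n + 1)) ∘ compF f n

/-- Backward compositions `F_{-n} = f_n⁻¹ ∘ ⋯ ∘ f_1⁻¹ ∘ f_0⁻¹`. -/
def compB (f : ℕ → X ≃ X) : ℕ → X → X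
  | 0 => (f 0).symm
  | n + 1 => ((f (n + 1)).symm : X → X) ∘ compB f n

/-- The time-`n` map `F_n` for `n : ℤ`. -/
def compZ (f : ℕ → X ≃ X) : ℤ → X → X
  | Int.ofNat n => compF f n
  | Int.negSucc n => compB f (n + 1)

/-- `F_{[a, a+r]} = f_{a+r} ∘ ⋯ ∘ f_a` as an equivalence. -/
def seg (f : ℕ → X ≃ X) (a : ℕ) : ℕ → X ≃ X
  | 0 => f a
  | r + 1 => (seg f a r).trans (f (a + r + 1))

/-- `F⁻¹_{[a, a+r]} = f_{a+r}⁻¹ ∘ ⋯ ∘ f_a⁻¹` as an equivalence. -/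
def segInv (f : ℕ → X ≃ X) (a : ℕ) : ℕ → X ≃ X
  | 0 => (f a).symm
  | r + 1 => (segInv f a r).trans (f (a + r + 1)).symm

/-- A time varying bi-measurable map: each `f n` and its inverse are measurable, `f 0 = id`. -/
def BiMeasurable [MeasurableSpace X] (f : ℕ → X ≃ X) : Prop :=
  (∀ n, Measurable (f n)) ∧ (∀ n, Measurable ((f n).symm : X → X)) ∧ f 0 = Equiv.refl X

/-- The dynamical ball `Γ_δ(x)`. -/
def Gamma [PseudoMetricSpace X] (f : ℕ → X ≃ X) (δ : ℝ) (x : X) : Set X :=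
  {y | ∀ n : ℤ, dist (compZ f n x) (compZ f n y) ≤ δ}

/-- `μ` is expansive w.r.t. `F`. -/
def IsExpansiveMeasure [PseudoMetricSpace X] [MeasurableSpace X] (μ : Measure X)
    (f : ℕ → X ≃ X) : Prop :=
  ∃ δ > 0, ∀ x : X, μ (Gamma f δ x) = 0

/-- `η(f,g) = sup_x min(d(f x, g x), 1)`. -/
noncomputable def eta [PseudoMetricSpace X] (f g : X → X) : ℝ :=
  ⨆ x, min (dist (f x) (g x)) 1

/-- The metric `p` on time varying maps. -/
noncomputable def pDist [PseudoMetricSpace X] (f g : ℕ → X ≃ X) : ℝ :=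
  max (⨆ n, eta (f n) (g n)) (⨆ n, eta ((f n).symm) ((g n).symm))

/-- The `k`-th power system `F^k`, with `g_n = F_{[(n-1)k+1, nk]}`. -/
def powerF (f : ℕ → X ≃ X) (k : ℕ) : ℕ → X ≃ X
  | 0 => Equiv.refl X
  | n + 1 => seg f (n * k + 1) (k - 1)

/-- Upper semicontinuity of a set valued map at the points of its domain. -/
def USCSetMap [PseudoMetricSpace X] (H : X → Set X) : Prop :=
  ∀ x : X, (H x).Nonempty → ∀ O : Set X, IsOpen O → H x ⊆ O →
    ∃ δ > 0, ∀ y : X, dist x y < δ → H y ⊆ O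

/-- `μ` is topologically stable w.r.t. `F`. -/
def TopStableMeasure [MetricSpace X] [MeasurableSpace X] (μ : Measure X)
    (f : ℕ → X ≃ X) : Prop :=
  ∀ ε > 0, ∃ δ : ℝ, 0 < δ ∧ δ < 1 ∧
    ∀ g : ℕ → X ≃ X, BiMeasurable g → pDist f g < δ →
      ∃ H : X → Set X,
        (∀ x, IsCompact (H x)) ∧ USCSetMap H ∧
        MeasurableSet {x : X | (H x).Nonempty} ∧
        μ {x : X | ¬ (H x).Nonempty} = 0 ∧
        (∀ x, μ (H x) = 0) ∧
        (∀ x, H x ⊆ ball x ε) ∧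
        (∀ x, ∀ n : ℤ, compZ f n '' H x ⊆ closedBall (compZ g n x) ε)

/-- `F` is topologically stable. -/
def TopStableMap [MetricSpace X] [MeasurableSpace X] (f : ℕ → X ≃ X) : Prop :=
  ∀ ε > 0, ∃ δ : ℝ, 0 < δ ∧ δ < 1 ∧
    ∀ g : ℕ → X ≃ X, BiMeasurable g → pDist f g < δ →
      ∃ h : X → X, Continuous h ∧
        ∀ x, dist (h x) x < ε ∧ ∀ n : ℤ, dist (compZ f n (h x)) (compZ g n x) < ε

/-- `μ` is persistent w.r.t. `F`. -/
def MeasurePersistent [MetricSpace X] [MeasurableSpace X] (μ : Measure X)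
    (f : ℕ → X ≃ X) : Prop :=
  ∀ ε > 0, ∃ δ : ℝ, 0 < δ ∧ δ < 1 ∧ ∃ B : Set X, MeasurableSet B ∧ μ (Set.univ \ B) = 0 ∧
    ∀ g : ℕ → X ≃ X, BiMeasurable g → pDist f g < δ →
      ∀ x ∈ B, ∃ y : X, ∀ n : ℤ, dist (compZ f n y) (compZ g n x) < ε

/-- A `δ`-pseudo orbit of `F`. -/
def IsPseudoOrbit [PseudoMetricSpace X] (f : ℕ → X ≃ X) (δ : ℝ) (x : ℤ → X) : Prop :=
  (∀ n : ℕ, dist (f (n + 1) (x n)) (x (n + 1)) < δ) ∧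
  (∀ n : ℕ, dist ((f (n + 1)).symm (x (-(n : ℤ)))) (x (-(n : ℤ) - 1)) < δ)

/-- `μ` has shadowing w.r.t. `F`. -/
def MeasureShadowing [PseudoMetricSpace X] [MeasurableSpace X] (μ : Measure X)
    (f : ℕ → X ≃ X) : Prop :=
  ∀ ε > 0, ∃ δ > 0, ∃ B : Set X, MeasurableSet B ∧ μ (Set.univ \ B) = 0 ∧
    ∀ x : ℤ → X, IsPseudoOrbit f δ x → x 0 ∈ B →
      ∃ y : X, ∀ n : ℤ, dist (compZ f n y) (x n) < ε

/-- The ω-limit set of `x` under `F`. -/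
def omegaLimitSet [PseudoMetricSpace X] (f : ℕ → X ≃ X) (x : X) : Set X :=
  {y | ∃ φ : ℕ → ℤ, StrictMono φ ∧
    Filter.Tendsto (fun k => dist (compZ f (φ k) x) y) Filter.atTop (nhds 0)}

/-- The α-limit set of `x` under `F`. -/
def alphaLimitSet [PseudoMetricSpace X] (f : ℕ → X ≃ X) (x : X) : Set X :=
  {y | ∃ φ : ℕ → ℤ, StrictAnti φ ∧
    Filter.Tendsto (fun k => dist (compZ f (φ k) x) y) Filter.atTop (nhds 0)}

/-- `A(F)`: points with converging semiorbits. -/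
def ConvSemiorbits [PseudoMetricSpace X] (f : ℕ → X ≃ X) : Set X :=
  {x | (∃ a, alphaLimitSet f x = {a}) ∧ (∃ b, omegaLimitSet f x = {b})}

/-- The set `A(x, y, n, m)`. -/
def ApproxSet [PseudoMetricSpace X] (f : ℕ → X ≃ X) (x y : X) (n m : ℕ) : Set X :=
  {z | ∀ i : ℕ, m ≤ i →
    max (dist (compZ f (-(i : ℤ)) z) x) (dist (compZ f (i : ℤ) z) y) ≤ 1 / (n : ℝ)}

/-- The non-wandering set `Ω(F)`. -/
def NonWandering [TopologicalSpace X] (f : ℕ → X ≃ X) : Set X :=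
  {x | ∀ U : Set X, IsOpen U → x ∈ U → ∀ n : ℕ, ∃ m : ℕ, n ≤ m ∧ ∃ r : ℕ,
    (((seg f m r : X → X) '' U) ∩ U).Nonempty ∨
      (((segInv f m r : X → X) '' U) ∩ U).Nonempty}

/-- A finite open cover `A` is a `μ`-generator for `F`. -/
def IsMuGenerator [MetricSpace X] [MeasurableSpace X] (μ : Measure X) (f : ℕ → X ≃ X)
    (A : Finset (Set X)) : Prop :=
  (∀ U ∈ A, IsOpen U) ∧ (⋃ U ∈ A, U) = Set.univ ∧
    ∀ B : ℤ → Set X, (∀ n, B n ∈ A) → μ (⋂ n : ℤ, compZ f n '' closure (B n)) = 0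


lemma eta_le_one' [PseudoMetricSpace X] (f g : X → X) : eta f g ≤ 1 :=
  Real.iSup_le (fun _ => min_le_right _ _) zero_le_one

lemma min_dist_le_eta [PseudoMetricSpace X] (f g : X → X) (x : X) :
    min (dist (f x) (g x)) 1 ≤ eta f g :=
  le_ciSup (f := fun y => min (dist (f y) (g y)) 1)
    ⟨1, by rintro v ⟨y, rfl⟩; exact min_le_right _ _⟩ x

lemma dist_lt_of_pDist_lt [PseudoMetricSpace X] {f g : ℕ → X ≃ X} {δ : ℝ}
    (h : pDist f g < δ) (hδ : δ ≤ 1) (n : ℕ) (y : X) :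
    dist (f n y) (g n y) < δ := by
  have h1 : eta (f n) (g n) ≤ ⨆ m, eta (f m) (g m) :=
    le_ciSup (f := fun m => eta (f m : X → X) (g m))
      ⟨1, by rintro v ⟨m, rfl⟩; exact eta_le_one' _ _⟩ n
  have h2 : (⨆ m, eta (f m) (g m)) ≤ pDist f g := le_max_left _ _
  have hmin : min (dist (f n y) (g n y)) 1 < δ :=
    lt_of_le_of_lt (le_trans (min_dist_le_eta _ _ y) (le_trans h1 h2)) h
  rcases lt_or_ge (dist (f n y) (g n y)) 1 with hd | hd
  · rwa [min_eq_left hd.le] at hmin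
  · exact absurd (lt_of_le_of_lt hδ (by rwa [min_eq_right hd] at hmin)) (lt_irrefl _)

lemma dist_symm_lt_of_pDist_lt [PseudoMetricSpace X] {f g : ℕ → X ≃ X} {δ : ℝ}
    (h : pDist f g < δ) (hδ : δ ≤ 1) (n : ℕ) (y : X) :
    dist ((f n).symm y) ((g n).symm y) < δ := by
  have h1 : eta ((f n).symm) ((g n).symm) ≤ ⨆ m, eta ((f m).symm : X → X) ((g m).symm) :=
    le_ciSup (f := fun m => eta ((f m).symm : X → X) ((g m).symm))
      ⟨1, by rintro v ⟨m, rfl⟩; exact eta_le_one' _ _⟩ n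
  have h2 : (⨆ m, eta ((f m).symm : X → X) ((g m).symm)) ≤ pDist f g := le_max_right _ _
  have hmin : min (dist ((f n).symm y) ((g n).symm y)) 1 < δ :=
    lt_of_le_of_lt (le_trans (min_dist_le_eta _ _ y) (le_trans h1 h2)) h
  rcases lt_or_ge (dist ((f n).symm y) ((g n).symm y)) 1 with hd | hd
  · rwa [min_eq_left hd.le] at hmin
  · exact absurd (lt_of_le_of_lt hδ (by rwa [min_eq_right hd] at hmin)) (lt_irrefl _)

theorem persistent_of_shadowing
    [MetricSpace X] [MeasurableSpace X] [BorelSpace X]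
    (f : ℕ → X ≃ X) (hf : BiMeasurable f)
    (μ : Measure X) (hsh : MeasureShadowing μ f) :
    MeasurePersistent μ f := by
  intro ε hε
  obtain ⟨δ₀, hδ₀, B, hB, hμ, hsh'⟩ := hsh ε hε
  refine ⟨min δ₀ (1/2), lt_min hδ₀ (by norm_num),
    lt_of_le_of_lt (min_le_right _ _) (by norm_num), B, hB, hμ, ?_⟩
  intro g hg hpg x hx
  have hδ1 : min δ₀ (1/2) ≤ 1 := le_trans (min_le_right _ _) (by norm_num)
  have hδ0' : min δ₀ (1/2) ≤ δ₀ := min_le_left _ _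
  set o : ℤ → X := fun n => compZ g n x with ho_def
  have hg0 : g 0 = Equiv.refl X := hg.2.2
  have hneg : ∀ n : ℕ, o (-(n : ℤ) - 1) = (g (n + 1)).symm (o (-(n : ℤ))) := by
    intro n
    cases n with
    | zero =>
      show compZ g (-1) x = (g 1).symm (compZ g 0 x)
      have : (-1 : ℤ) = Int.negSucc 0 := rfl
      rw [this]
      simp [compZ, compB, compF, hg0]
    | succ m =>
      have h1 : (-(((m : ℕ) + 1 : ℕ) : ℤ) - 1) = Int.negSucc (m + 1) := by
        simp [Int.negSucc_eq]; push_cast; ring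
      have h2 : (-(((m : ℕ) + 1 : ℕ) : ℤ)) = Int.negSucc m := by
        simp [Int.negSucc_eq]
      show compZ g (-(((m : ℕ) + 1 : ℕ) : ℤ) - 1) x
        = (g (m + 1 + 1)).symm (compZ g (-(((m : ℕ) + 1 : ℕ) : ℤ)) x)
      rw [h1, h2]
      rfl
  have ho : IsPseudoOrbit f δ₀ o := by
    constructor
    · intro n
      have : o ((n : ℤ) + 1) = g (n + 1) (o (n : ℤ)) := rfl
      calc dist (f (n + 1) (o (n : ℤ))) (o ((n : ℤ) + 1))
          = dist (f (n + 1) (o (n : ℤ))) (g (n + 1) (o (n : ℤ))) := by rw [this]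
        _ < min δ₀ (1/2) := dist_lt_of_pDist_lt hpg hδ1 (n + 1) _
        _ ≤ δ₀ := hδ0'
    · intro n
      calc dist ((f (n + 1)).symm (o (-(n : ℤ)))) (o (-(n : ℤ) - 1))
          = dist ((f (n + 1)).symm (o (-(n : ℤ)))) ((g (n + 1)).symm (o (-(n : ℤ)))) := by
            rw [hneg n]
        _ < min δ₀ (1/2) := dist_symm_lt_of_pDist_lt hpg hδ1 (n + 1) _
        _ ≤ δ₀ := hδ0'
  have ho0 : o 0 = x := by
    show compZ g 0 x = x
    simp [compZ, compF, hg0]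
  obtain ⟨y, hy⟩ := hsh' o ho (by rw [ho0]; exact hx)
  exact ⟨y, fun n => hy n⟩
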